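/- arXiv:2212.10518 — 6 statements merged into one kernel-verified Lean document; each statement's English description precedes it below -/
import Mathlib

section
/- Let d ≥ 2 with d not congruent to 0 mod 4, let e be a positive integer with gcd(d, e) = 1, and let a be a nonzero element of F_q. Then x^d - a is irreducible over F_q if and only if x^d - a^e is irreducible over F_q. -/
open Polynomial

/-- `iter f n` is the n-th iterate of `f` under composition, with `iter f 0 = X`. -/
noncomputable def iter {F : Type*} [Field F] (f : F[X]) : ℕ → F[X]
  | 0 => X
  | n + 1 => (iter f n).comp f

/-- `P d a n` is the value `P_n(a)` where `P_1(x) = x` and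
`P_n(x) = P_{n-1}(x)^d + (-1)^(d-1) x` for `n ≥ 2`. (`P d a 0` is junk, set to `a`.) -/
def P {F : Type*} [Field F] (d : ℕ) (a : F) : ℕ → F
  | 0 => a
  | 1 => a
  | n + 2 => (P d a (n + 1)) ^ d + (-1 : F) ^ (d - 1) * a

universe u

/-- Vahlen–Capelli criterion when `4 ∤ d`. -/
theorem irred_iff_not_pow {K : Type u} [Field K] {d : ℕ} (hd : d ≠ 0) (hd4 : ¬ (4 ∣ d)) (a : K) :
    Irreducible (X ^ d - C a) ↔ ∀ p : ℕ, p.Prime → p ∣ d → ∀ b : K, b ^ p ≠ a := by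
  constructor
  · intro H p hp hpd b
    exact pow_ne_of_irreducible_X_pow_sub_C H hpd hp.ne_one b
  · intro ha
    rcases Nat.even_or_odd d with hev | hodd
    · obtain ⟨m, hm⟩ := hev
      have hm2 : d = m * 2 := by omega
      have hmodd : Odd m := by
        rcases Nat.even_or_odd m with ⟨k, hk⟩ | h
        · exact absurd ⟨k, by omega⟩ hd4
        · exact h
      subst hm2
      apply X_pow_mul_sub_C_irreducible
        (X_pow_sub_C_irreducible_of_prime Nat.prime_two
          (ha 2 Nat.prime_two (dvd_mul_left 2 m)))
      intro E _ _ x hx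
      have hxint : IsIntegral K x := not_not.mp fun h ↦ by
        simpa only [degree_zero, degree_X_pow_sub_C (by norm_num : 0 < 2),
          WithBot.natCast_ne_bot] using congr_arg degree (hx.symm.trans (dif_neg h))
      apply X_pow_sub_C_irreducible_of_odd hmodd
      intro p hp hpm b hb
      have hpodd : Odd p := hp.odd_of_ne_two (by
        rintro rfl
        exact (Nat.two_dvd_ne_zero.mpr (Nat.odd_iff.mp hmodd)) hpm)
      apply ha p hp (Dvd.dvd.mul_right hpm 2) (-(Algebra.norm K b))
      have hnorm : (Algebra.norm K b) ^ p = Algebra.norm K (IntermediateField.AdjoinSimple.gen K x) := by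
        rw [← map_pow, hb]
      rw [← IntermediateField.adjoin.powerBasis_gen hxint,
        Algebra.PowerBasis.norm_gen_eq_coeff_zero_minpoly] at hnorm
      rw [hpodd.neg_pow, hnorm]
      have hdim : (IntermediateField.adjoin.powerBasis hxint).dim = 2 := by
        show (minpoly K x).natDegree = 2
        rw [hx, natDegree_X_pow_sub_C]
      rw [hdim, IntermediateField.adjoin.powerBasis_gen, IntermediateField.minpoly_gen, hx]
      simp
    · exact X_pow_sub_C_irreducible_of_odd hodd ha

lemma pow_iff_pow_pow {K : Type*} [Field K] {p e : ℕ} (hpe : Nat.Coprime p e) {a : K}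
    (ha : a ≠ 0) : (∃ b : K, b ^ p = a) ↔ (∃ b : K, b ^ p = a ^ e) := by
  constructor
  · rintro ⟨b, rfl⟩
    exact ⟨b ^ e, by rw [← pow_mul, ← pow_mul, mul_comm]⟩
  · rintro ⟨c, hc⟩
    rcases Nat.eq_zero_or_pos p with rfl | hp0
    · have he1 : e = 1 := Nat.coprime_zero_left e |>.mp hpe
      rw [he1, pow_one, pow_zero] at hc
      exact ⟨1, by rw [pow_zero, hc]⟩
    have hc0 : c ≠ 0 := by
      intro h
      rw [h, zero_pow (by omega)] at hc
      exact pow_ne_zero _ ha hc.symm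
    have h1 : (p : ℤ) * Nat.gcdA p e + e * Nat.gcdB p e = 1 := by
      have h := Nat.gcd_eq_gcd_ab p e
      rw [hpe] at h
      push_cast at h ⊢
      linarith
    set A := Nat.gcdA p e
    set B := Nat.gcdB p e
    refine ⟨a ^ A * c ^ B, ?_⟩
    have : (a ^ A * c ^ B) ^ p = a ^ (A * p) * c ^ (B * p) := by
      rw [mul_pow, ← zpow_natCast (a ^ A) p, ← zpow_natCast (c ^ B) p, ← zpow_mul, ← zpow_mul]
    rw [this, mul_comm B (p : ℤ), zpow_mul c, zpow_natCast c p, hc, ← zpow_natCast a e,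
      ← zpow_mul, ← zpow_add₀ ha, mul_comm A (p : ℤ)]
    rw [h1, zpow_one]


theorem stmt12 (q d e : ℕ) (hd : 2 ≤ d) (hd4 : ¬ (4 ∣ d)) (he : 0 < e)
    (hde : Nat.gcd d e = 1)
    (F : Type*) [Field F] [Fintype F] (hF : Fintype.card F = q)
    (a : F) (ha : a ≠ 0) :
    Irreducible (X ^ d - C a : F[X]) ↔ Irreducible (X ^ d - C (a ^ e) : F[X]) := by
  have hd0 : d ≠ 0 := by omega
  rw [irred_iff_not_pow hd0 hd4 a, irred_iff_not_pow hd0 hd4 (a ^ e)]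
  have key : ∀ p : ℕ, p.Prime → p ∣ d →
      ((∃ b : F, b ^ p = a) ↔ ∃ b : F, b ^ p = a ^ e) := fun p hp hpd =>
    pow_iff_pow_pow (Nat.Coprime.coprime_dvd_left hpd hde) ha
  constructor <;> intro H p hp hpd b hb
  · obtain ⟨c, hc⟩ := (key p hp hpd).2 ⟨b, hb⟩
    exact H p hp hpd c hc
  · obtain ⟨c, hc⟩ := (key p hp hpd).1 ⟨b, hb⟩
    exact H p hp hpd c hc
end

section
/- Let d ≥ 2 with d not congruent to 0 mod 4, let d̂ be the squarefree part of d (the product of the distinct prime divisors of d), let a be a nonzero element of F_q and b a d̂-th power in F_q^*. Then x^d - a is irreducible over F_q if and only if x^d - ab is irreducible over F_q. -/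
open Polynomial

/-!
By Capelli's theorem, when `4 ∤ d` the binomial `X ^ d - a` is irreducible exactly when `a` is
not a `p`-th power for any prime `p ∣ d`. Multiplying `a` by `b = c ^ rad d` does not change this
condition, since for every prime `p ∣ d` the factor `b` is itself a nonzero `p`-th power.
-/

open IntermediateField

universe u

theorem norm_adjoinSimple_gen_of_minpoly_eq_X_pow_sub_C {K E : Type*} [Field K] [Field E]
    [Algebra K E] {m : ℕ} (hm : Odd m) {a : K} {x : E} (hx : minpoly K x = X ^ m - C a) :
    Algebra.norm K (AdjoinSimple.gen K x) = a := by
  have hm0 : m ≠ 0 := hm.pos.ne'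
  have hint : IsIntegral K x := minpoly.ne_zero_iff.mp <| by
    rw [hx]; exact (monic_X_pow_sub_C a hm0).ne_zero
  rw [← adjoin.powerBasis_gen hint, Algebra.PowerBasis.norm_gen_eq_coeff_zero_minpoly]
  simp [minpoly_gen, hx, Ne.symm hm0, hm.neg_pow]

theorem X_pow_two_mul_sub_C_irreducible_of_odd {K : Type u} [Field K] {m : ℕ} (hm : Odd m)
    {a : K} (ha : ∀ p : ℕ, p.Prime → p ∣ 2 * m → ∀ b : K, b ^ p ≠ a) :
    Irreducible (X ^ (2 * m) - C a) := by
  refine X_pow_mul_sub_C_irreducible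
    (X_pow_sub_C_irreducible_of_odd hm fun p hp hpm ↦ ha p hp (hpm.mul_left 2)) ?_
  intro E _ _ x hx
  refine X_pow_sub_C_irreducible_of_prime Nat.prime_two fun y hy ↦ ?_
  -- a square root of the root `x` of `X ^ m - a` would make `a` a square, through the norm
  apply ha 2 Nat.prime_two (dvd_mul_right 2 m) (Algebra.norm K y)
  rw [← map_pow, hy, norm_adjoinSimple_gen_of_minpoly_eq_X_pow_sub_C hm hx]

theorem X_pow_sub_C_irreducible_of_not_four_dvd {K : Type u} [Field K] {n : ℕ} (hn : n ≠ 0)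
    (h4 : ¬ 4 ∣ n) {a : K} (ha : ∀ p : ℕ, p.Prime → p ∣ n → ∀ b : K, b ^ p ≠ a) :
    Irreducible (X ^ n - C a) := by
  rcases Nat.even_or_odd n with ⟨m, rfl⟩ | hodd
  · have hm : Odd m := Nat.not_even_iff_odd.mp fun ⟨k, hk⟩ ↦ h4 ⟨k, by omega⟩
    rw [← two_mul] at ha ⊢
    exact X_pow_two_mul_sub_C_irreducible_of_odd hm ha
  · exact X_pow_sub_C_irreducible_of_odd hodd ha

theorem X_pow_sub_C_irreducible_iff_forall_prime_of_not_four_dvd {K : Type u} [Field K] {n : ℕ}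
    (hn : n ≠ 0) (h4 : ¬ 4 ∣ n) {a : K} :
    Irreducible (X ^ n - C a) ↔ ∀ p : ℕ, p.Prime → p ∣ n → ∀ b : K, b ^ p ≠ a :=
  ⟨fun h _ hp hpn ↦ pow_ne_of_irreducible_X_pow_sub_C h hpn hp.ne_one,
    X_pow_sub_C_irreducible_of_not_four_dvd hn h4⟩

theorem exists_pow_eq_mul_pow_iff {G : Type*} [CommGroupWithZero G] {a u : G} (hu : u ≠ 0)
    (p : ℕ) : (∃ z : G, z ^ p = a * u ^ p) ↔ ∃ z : G, z ^ p = a := by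
  constructor
  · rintro ⟨z, hz⟩
    exact ⟨z * u⁻¹, by rw [mul_pow, hz, inv_pow, mul_inv_cancel_right₀ (pow_ne_zero p hu)]⟩
  · rintro ⟨z, rfl⟩
    exact ⟨z * u, mul_pow z u p⟩

theorem exists_pow_prod_primeFactors_eq_pow {M : Type*} [Monoid M] {n p : ℕ}
    (hp : p ∈ n.primeFactors) (c : M) : ∃ e : M, c ^ (∏ q ∈ n.primeFactors, q) = e ^ p := by
  obtain ⟨k, hk⟩ : p ∣ ∏ q ∈ n.primeFactors, q := Finset.dvd_prod_of_mem _ hp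
  exact ⟨c ^ k, by rw [hk, mul_comm, pow_mul]⟩

theorem stmt13_general (d : ℕ) (hd : 2 ≤ d) (hd4 : ¬ (4 ∣ d))
    (F : Type*) [Field F]
    (a b c : F) (hc : c ≠ 0) (hb : b = c ^ (∏ p ∈ d.primeFactors, p)) :
    Irreducible (X ^ d - C a : F[X]) ↔ Irreducible (X ^ d - C (a * b) : F[X]) := by
  have hd0 : d ≠ 0 := by omega
  rw [X_pow_sub_C_irreducible_iff_forall_prime_of_not_four_dvd hd0 hd4,
    X_pow_sub_C_irreducible_iff_forall_prime_of_not_four_dvd hd0 hd4]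
  refine forall₃_congr fun p hp hpd ↦ ?_
  obtain ⟨e, he⟩ := exists_pow_prod_primeFactors_eq_pow (Nat.mem_primeFactors.2 ⟨hp, hpd, hd0⟩) c
  have he0 : e ≠ 0 := by
    rintro rfl
    exact pow_ne_zero _ hc (he.trans (zero_pow hp.ne_zero))
  simp only [← not_exists, hb, he, exists_pow_eq_mul_pow_iff he0]

theorem stmt13 (q d : ℕ) (hd : 2 ≤ d) (hd4 : ¬ (4 ∣ d))
    (F : Type*) [Field F] [Fintype F] (hF : Fintype.card F = q)
    (a b c : F) (ha : a ≠ 0) (hc : c ≠ 0) (hb : b = c ^ (∏ p ∈ d.primeFactors, p)) :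
    Irreducible (X ^ d - C a : F[X]) ↔ Irreducible (X ^ d - C (a * b) : F[X]) :=
  stmt13_general d hd hd4 F a b c hc hb
end

section
/- Let d₁, d₂ ≥ 2 be integers with the same set of prime factors, with neither congruent to 0 mod 4, and a a nonzero element of F_q. Then x^{d₁} - a is irreducible over F_q if and only if x^{d₂} - a is irreducible over F_q. -/
open Polynomial

open IntermediateField in
theorem aux_X_pow_sub_C_irreducible_of_not_four_dvd {K : Type u} [Field K]
    {n : ℕ} (h4 : ¬ (4 ∣ n)) {a : K}
    (ha : ∀ p : ℕ, p.Prime → p ∣ n → ∀ b : K, b ^ p ≠ a) :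
    Irreducible (X ^ n - C a) := by
  rcases Nat.even_or_odd n with he | ho
  swap
  · exact X_pow_sub_C_irreducible_of_odd ho ha
  obtain ⟨m, rfl⟩ := he.two_dvd
  have hm : Odd m := by
    rcases Nat.even_or_odd m with ⟨k, rfl⟩ | hm
    · exact absurd ⟨k, by ring⟩ h4
    · exact hm
  rw [show 2 * m = m * 2 by ring]
  apply X_pow_mul_sub_C_irreducible
    (X_pow_sub_C_irreducible_of_prime Nat.prime_two (ha 2 Nat.prime_two ⟨m, rfl⟩))
  intro E _ _ x hx
  have hint : IsIntegral K x := not_not.mp fun h ↦ by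
    simpa only [degree_zero, degree_X_pow_sub_C (by norm_num : 0 < 2),
      WithBot.natCast_ne_bot] using congr_arg degree (hx.symm.trans (dif_neg h))
  apply X_pow_sub_C_irreducible_of_odd hm
  intro q hq hqm b hb
  have hqo : Odd q := hq.odd_of_ne_two (by rintro rfl; exact (Nat.not_even_iff_odd.mpr hm) (even_iff_two_dvd.mpr hqm))
  apply ha q hq (Dvd.dvd.mul_left hqm 2) (-(Algebra.norm K b))
  rw [hqo.neg_pow, ← map_pow, hb, ← adjoin.powerBasis_gen hint,
    Algebra.PowerBasis.norm_gen_eq_coeff_zero_minpoly]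
  simp [minpoly_gen, hx]

theorem stmt14 (q d₁ d₂ : ℕ) (hd₁ : 2 ≤ d₁) (hd₂ : 2 ≤ d₂)
    (hpf : d₁.primeFactors = d₂.primeFactors)
    (hd₁4 : ¬ (4 ∣ d₁)) (hd₂4 : ¬ (4 ∣ d₂))
    (F : Type*) [Field F] [Fintype F] (hF : Fintype.card F = q)
    (a : F) (ha : a ≠ 0) :
    Irreducible (X ^ d₁ - C a : F[X]) ↔ Irreducible (X ^ d₂ - C a : F[X]) := by
  have key : ∀ d : ℕ, 2 ≤ d → ¬ (4 ∣ d) →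
      (Irreducible (X ^ d - C a : F[X]) ↔
        ∀ p : ℕ, p.Prime → p ∣ d → ∀ b : F, b ^ p ≠ a) := by
    intro d hd hd4
    constructor
    · intro h p hp hpd
      exact pow_ne_of_irreducible_X_pow_sub_C h hpd hp.ne_one
    · exact aux_X_pow_sub_C_irreducible_of_not_four_dvd hd4
  rw [key d₁ hd₁ hd₁4, key d₂ hd₂ hd₂4]
  have hmem : ∀ p : ℕ, p.Prime → (p ∣ d₁ ↔ p ∣ d₂) := by
    intro p hp
    constructor <;> intro h
    · have h1 : p ∈ d₁.primeFactors := Nat.mem_primeFactors.mpr ⟨hp, h, by omega⟩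
      rw [hpf] at h1
      exact (Nat.mem_primeFactors.mp h1).2.1
    · have h1 : p ∈ d₂.primeFactors := Nat.mem_primeFactors.mpr ⟨hp, h, by omega⟩
      rw [← hpf] at h1
      exact (Nat.mem_primeFactors.mp h1).2.1
  constructor <;> intro h p hp hpd b
  · exact h p hp ((hmem p hp).mpr hpd) b
  · exact h p hp ((hmem p hp).mp hpd) b
end

section
/- Let d ≥ 2 with d not congruent to 0 mod 4 and f(x) = x^d - a over F_q with a ≠ 0. Define P_1(x) = x and P_n(x) = P_{n-1}(x)^d + (-1)^{d-1} x for n ≥ 2. If P_n(a) is an l-th power in F_q^* for some n ≥ 1 and some prime l dividing d, then the n-th iterate f_n(x) is reducible over F_q. -/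
open Polynomial

/-!
If `l ∤ q - 1`, every element of `F_q` is an `l`-th power, so `X ^ d - a` is reducible, and hence
so is `f_n = (X ^ d - a) ∘ f_{n-1}`.

If `l ∣ q - 1`, write `f_n = g(X ^ d)` with `g = f_{n-1}(X - a)` and let `γ` be a root of `f_n`.
Then `u = γ ^ d` is a root of the irreducible `g`, of degree `D = d ^ (n-1)`, and its norm from
`K = F_q(u)` is `(-1) ^ D g(0) = P_n(a) = b ^ l`. With `d = l m` this gives
`(γ ^ m) ^ (|K| - 1) = N(u) ^ ((q - 1) / l) = b ^ (q - 1) = 1`, so `γ ^ m ∈ K` and `γ` has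
degree at most `m D < d ^ n` over `F_q`, contradicting the irreducibility of `f_n`.
-/

section iter

variable {F : Type*} [Field F]

theorem iter_succ' (f : F[X]) (n : ℕ) : iter f (n + 1) = f.comp (iter f n) := by
  induction n with
  | zero => simp [iter]
  | succ n ih => rw [iter, ih, comp_assoc, ← ih, iter]

theorem natDegree_iter (f : F[X]) (n : ℕ) : (iter f n).natDegree = f.natDegree ^ n := by
  induction n with
  | zero => simp [iter]
  | succ n ih => rw [iter, natDegree_comp, ih, pow_succ]

theorem monic_iter {f : F[X]} (hf : f.Monic) (hf0 : f.natDegree ≠ 0) (n : ℕ) :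
    (iter f n).Monic := by
  induction n with
  | zero => exact monic_X
  | succ n ih => exact ih.comp hf hf0

theorem P_succ_eq_eval_iter {d : ℕ} (hd : d ≠ 0) (a : F) (k : ℕ) :
    P d a (k + 1) = (-1) ^ d ^ k * (iter (X ^ d - C a) k).eval (-a) := by
  induction k with
  | zero => simp [P, iter]
  | succ k ih =>
    have hsign : (-1 : F) ^ (d - 1) = -(-1) ^ d ^ (k + 1) := by
      rcases Nat.even_or_odd d with h | h
      · rw [(Nat.Even.sub_odd (by omega) h odd_one).neg_one_pow,
          (h.pow_of_ne_zero k.succ_ne_zero).neg_one_pow]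
      · rw [(Nat.Odd.sub_odd h odd_one).neg_one_pow, h.pow.neg_one_pow, neg_neg]
    rw [P, ih, iter_succ', eval_comp, hsign]
    simp only [eval_sub, eval_pow, eval_X, eval_C]
    ring

end iter

namespace Polynomial

variable {K : Type*} [Field K]

theorem isUnit_of_isUnit_comp {p q : K[X]} (hq : q.natDegree ≠ 0) (h : IsUnit (p.comp q)) :
    IsUnit p := by
  have hp : p ≠ 0 := by rintro rfl; simp at h
  have hdeg : p.natDegree = 0 := by
    simpa [natDegree_comp, hq] using natDegree_eq_zero_of_isUnit h
  rw [isUnit_iff_degree_eq_zero, degree_eq_natDegree hp, hdeg, Nat.cast_zero]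

theorem irreducible_of_irreducible_comp {p q : K[X]} (hq : q.natDegree ≠ 0)
    (h : Irreducible (p.comp q)) : Irreducible p where
  not_isUnit hp := h.not_isUnit (hp.map (compRingHom q))
  isUnit_or_isUnit A B hAB := (h.isUnit_or_isUnit (by rw [hAB, mul_comp])).imp
    (isUnit_of_isUnit_comp hq) (isUnit_of_isUnit_comp hq)

end Polynomial

namespace FiniteField

theorem exists_pow_eq_of_coprime {F : Type*} [Field F] [Fintype F] {l : ℕ} (hl : l ≠ 0)
    (hcop : (Fintype.card F - 1).Coprime l) (a : F) : ∃ c, c ^ l = a := by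
  rcases eq_or_ne a 0 with rfl | ha
  · exact ⟨0, zero_pow hl⟩
  have hcard : (Nat.card Fˣ).Coprime l := by rwa [Nat.card_units, Nat.card_eq_fintype_card]
  refine ⟨(powCoprime hcard).symm (Units.mk0 a ha), ?_⟩
  simpa using congrArg Units.val ((powCoprime hcard).apply_symm_apply (Units.mk0 a ha))

theorem mem_range_algebraMap_of_pow_card_eq {K L : Type*} [Field K] [Finite K] [Field L]
    [Algebra K L] {y : L} (hy : y ^ Nat.card K = y) : y ∈ Set.range (algebraMap K L) := by
  have hne : (X ^ Nat.card K - X : K[X]).map (algebraMap K L) ≠ 0 :=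
    Polynomial.map_ne_zero (X_pow_card_sub_X_ne_zero K Finite.one_lt_card)
  have hroot : y ∈ ((X ^ Nat.card K - X : K[X]).map (algebraMap K L)).roots := by
    rw [mem_roots hne]
    simp [hy]
  rw [Polynomial.splits_X_pow_nat_card_sub_X.roots_map] at hroot
  obtain ⟨k, -, rfl⟩ := Multiset.mem_map.mp hroot
  exact ⟨k, rfl⟩

theorem pow_card_eq_self_of_pow_eq_of_norm_eq_pow {F K L : Type*} [Field F] [Fintype F]
    [Field K] [Finite K] [Algebra F K] [Field L] [Algebra K L] {l : ℕ}
    (hl : l ∣ Fintype.card F - 1) {u : K} {b : F} (hb : b ≠ 0)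
    (hu : Algebra.norm F u = b ^ l) {y : L} (hy : y ^ l = algebraMap K L u) :
    y ^ Nat.card K = y := by
  set q := Fintype.card F
  have hq : 0 < q - 1 := Nat.sub_pos_of_lt Fintype.one_lt_card
  have : Module.Finite F K := Module.Finite.of_finite
  obtain ⟨t, ht⟩ := hl
  obtain ⟨s, hs⟩ : q - 1 ∣ Nat.card K - 1 := by
    rw [Module.natCard_eq_pow_finrank (K := F), Nat.card_eq_fintype_card]
    simpa using Nat.sub_dvd_pow_sub_pow q 1 (Module.finrank F K)
  have hnorm : u ^ s = algebraMap F K (b ^ l) := by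
    rw [← hu, algebraMap_norm_eq_pow, hs, Nat.card_eq_fintype_card,
      Nat.mul_div_cancel_left _ hq]
  have hy1 : y ^ (Nat.card K - 1) = 1 := by
    calc y ^ (Nat.card K - 1) = algebraMap K L ((u ^ s) ^ t) := by
          rw [hs, ht, map_pow, map_pow, ← hy, ← pow_mul, ← pow_mul]; ring_nf
      _ = 1 := by
          rw [hnorm, ← map_pow, ← pow_mul, ← ht, pow_card_sub_one_eq_one b hb, map_one, map_one]
  calc y ^ Nat.card K = y ^ (Nat.card K - 1) * y := by
        rw [← pow_succ, Nat.sub_add_cancel Nat.card_pos]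
    _ = y := by rw [hy1, one_mul]

end FiniteField

theorem minpoly.natDegree_le_finrank_mul_of_pow_mem {F L : Type*} [Field F] [Field L]
    [Algebra F L] (K : IntermediateField F L) [FiniteDimensional F K] {x : L} {m : ℕ}
    (hm : m ≠ 0) (hx : x ^ m ∈ K) :
    (minpoly F x).natDegree ≤ Module.finrank F K * m := by
  set k : K := ⟨x ^ m, hx⟩
  have hmonic : ((minpoly F k).comp (X ^ m)).Monic :=
    (minpoly.monic (IsIntegral.of_finite F k)).comp (monic_X_pow m) (by simpa using hm)
  have hroot : Polynomial.aeval x ((minpoly F k).comp (X ^ m)) = 0 := by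
    rw [aeval_comp, aeval_X_pow]
    exact (aeval_algHom_apply K.val k _).trans (by rw [minpoly.aeval, map_zero])
  calc (minpoly F x).natDegree ≤ ((minpoly F k).comp (X ^ m)).natDegree :=
        natDegree_le_natDegree (minpoly.min F x hmonic hroot)
    _ = (minpoly F k).natDegree * m := by rw [natDegree_comp, natDegree_X_pow]
    _ ≤ Module.finrank F K * m := Nat.mul_le_mul_right _ (minpoly.natDegree_le k)

open IntermediateField in
theorem Polynomial.not_irreducible_comp_X_pow_of_norm_eq_pow {F : Type*} [Field F] [Fintype F]
    {g : F[X]} (hg : g.Monic) {l m : ℕ} (hl : 2 ≤ l) (hm : m ≠ 0)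
    (hlq : l ∣ Fintype.card F - 1) {b : F} (hb : b ≠ 0)
    (hnorm : (-1) ^ g.natDegree * g.coeff 0 = b ^ l) :
    ¬ Irreducible (g.comp (X ^ (l * m))) := by
  intro hirr
  have : Fact (Irreducible (g.comp (X ^ (l * m)))) := ⟨hirr⟩
  have hlm : (X ^ (l * m) : F[X]).natDegree ≠ 0 := by
    rw [natDegree_X_pow]; positivity
  set γ := AdjoinRoot.root (g.comp (X ^ (l * m)))
  have hγ : aeval γ (g.comp (X ^ (l * m))) = 0 := by
    rw [AdjoinRoot.aeval_eq, AdjoinRoot.mk_self]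
  set u := γ ^ (l * m)
  have hu : aeval u g = 0 := by simpa [aeval_comp] using hγ
  have hg_irr : Irreducible g := irreducible_of_irreducible_comp hlm hirr
  have hmin : minpoly F u = g := (minpoly.eq_of_irreducible_of_monic hg_irr hu hg).symm
  have hint : IsIntegral F u := ⟨g, hg, hu⟩
  have : FiniteDimensional F F⟮u⟯ := adjoin.finiteDimensional hint
  have : Finite F⟮u⟯ := Module.finite_of_finite F
  have hN : Algebra.norm F (AdjoinSimple.gen F u) = b ^ l := by
    rw [← adjoin.powerBasis_gen hint, Algebra.PowerBasis.norm_gen_eq_coeff_zero_minpoly,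
      adjoin.powerBasis_gen, minpoly_gen, adjoin.powerBasis_dim, hmin, hnorm]
  have hγm : (γ ^ m) ^ Nat.card F⟮u⟯ = γ ^ m :=
    FiniteField.pow_card_eq_self_of_pow_eq_of_norm_eq_pow hlq hb hN (by
      rw [← pow_mul, mul_comm m l]; rfl)
  obtain ⟨k, hk⟩ := FiniteField.mem_range_algebraMap_of_pow_card_eq hγm
  have hle := minpoly.natDegree_le_finrank_mul_of_pow_mem F⟮u⟯ hm (hk ▸ k.2 : γ ^ m ∈ F⟮u⟯)
  rw [← minpoly.eq_of_irreducible_of_monic hirr hγ (hg.comp (monic_X_pow _) hlm),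
    natDegree_comp, natDegree_X_pow, adjoin.finrank hint, hmin] at hle
  nlinarith [Nat.mul_pos hg_irr.natDegree_pos (Nat.pos_of_ne_zero hm)]

theorem stmt16_general (d n l : ℕ) (hd : 2 ≤ d) (hn : 1 ≤ n)
    (hl : l.Prime) (hld : l ∣ d)
    (F : Type*) [Field F] [Fintype F]
    (a : F)
    (hpow : ∃ b : F, b ≠ 0 ∧ b ^ l = P d a n) :
    ¬ Irreducible (iter (X ^ d - C a : F[X]) n) := by
  obtain ⟨b, hb, hbl⟩ := hpow
  obtain ⟨k, rfl⟩ : ∃ k, n = k + 1 := ⟨n - 1, by omega⟩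
  have hf : (X ^ d - C a : F[X]).natDegree = d := natDegree_X_pow_sub_C
  by_cases hlq : l ∣ Fintype.card F - 1
  · have hcomp : iter (X ^ d - C a) (k + 1)
        = ((iter (X ^ d - C a) k).comp (X - C a)).comp (X ^ d) := by
      rw [iter, comp_assoc, sub_comp, X_comp, C_comp]
    obtain ⟨m, rfl⟩ := hld
    rw [hcomp]
    refine not_irreducible_comp_X_pow_of_norm_eq_pow
      ((monic_iter (monic_X_pow_sub_C a (by omega)) (by omega) k).comp_X_sub_C a) hl.two_le
      (by rintro rfl; omega) hlq hb ?_
    rw [natDegree_comp, natDegree_iter, natDegree_X_sub_C, mul_one, hf, coeff_zero_eq_eval_zero,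
      eval_comp, eval_sub, eval_X, eval_C, zero_sub, hbl, P_succ_eq_eval_iter (by omega)]
  · obtain ⟨c, hc⟩ := FiniteField.exists_pow_eq_of_coprime hl.ne_zero
      (Nat.coprime_comm.mp (hl.coprime_iff_not_dvd.mpr hlq)) a
    rw [iter_succ']
    intro h
    refine pow_ne_of_irreducible_X_pow_sub_C (irreducible_of_irreducible_comp ?_ h) hld
      hl.ne_one c hc
    rw [natDegree_iter, hf]
    positivity

theorem stmt16 (q d n l : ℕ) (hd : 2 ≤ d) (hd4 : ¬ (4 ∣ d)) (hn : 1 ≤ n)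
    (hl : l.Prime) (hld : l ∣ d)
    (F : Type*) [Field F] [Fintype F] (hF : Fintype.card F = q)
    (a : F) (ha : a ≠ 0)
    (hpow : ∃ b : F, b ≠ 0 ∧ b ^ l = P d a n) :
    ¬ Irreducible (iter (X ^ d - C a : F[X]) n) :=
  stmt16_general d n l hd hn hl hld F a hpow
end

section
/- Let d ≥ 2 with d not congruent to 0 mod 4, f(x) = x^d - a over F_q with a ≠ 0, and δ = gcd(q - 1, d). Suppose P_n(a) ≠ 0 for all n ≥ 1. If the iterates f_1, ..., f_{(q-1)/δ + 1} are all irreducible over F_q, then f is stable over F_q. -/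
open Polynomial

namespace Aux18

open IntermediateField


variable {K : Type*} [Field K]

lemma iter_succ_left (f : K[X]) (n : ℕ) : iter f (n + 1) = f.comp (iter f n) := by
  induction n with
  | zero => simp [iter]
  | succ n ih =>
      show (iter f (n+1)).comp f = _
      conv_lhs => rw [ih]
      rw [Polynomial.comp_assoc]
      rfl

variable {d : ℕ} (hd : 2 ≤ d) (a : K)

include hd in
lemma iter_monic (n : ℕ) : (iter (X ^ d - C a) n).Monic := by
  induction n with
  | zero => simp only [iter]; exact monic_X
  | succ n ih =>
      exact ih.comp (monic_X_pow_sub_C a (by omega)) (by rw [natDegree_X_pow_sub_C]; omega)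

lemma iter_natDegree (n : ℕ) : (iter (X ^ d - C a) n).natDegree = d ^ n := by
  induction n with
  | zero => simp [iter]
  | succ n ih =>
      show ((iter (X ^ d - C a) n).comp _).natDegree = _
      rw [natDegree_comp, ih, natDegree_X_pow_sub_C, pow_succ]

lemma iter_one : iter (X ^ d - C a) 1 = X ^ d - C a := by
  show Polynomial.comp _ _ = _
  simp [iter]

lemma eval_zero_succ (n : ℕ) :
    (iter (X ^ d - C a) (n + 1)).eval 0 = ((iter (X ^ d - C a) n).eval 0) ^ d - a := by
  rw [iter_succ_left, eval_comp]
  simp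

include hd in
lemma eval_neg_a (n : ℕ) :
    (iter (X ^ d - C a) (n + 1)).eval 0 = (iter (X ^ d - C a) n).eval (-a) := by
  show ((iter (X ^ d - C a) n).comp _).eval 0 = _
  rw [eval_comp]
  simp [zero_pow (show d ≠ 0 by omega), zero_sub]

lemma P_succ (n : ℕ) (hn : 1 ≤ n) :
    P d a (n + 1) = (P d a n) ^ d + (-1 : K) ^ (d - 1) * a := by
  obtain ⟨k, rfl⟩ : ∃ k, n = k + 1 := ⟨n - 1, by omega⟩
  rfl

include hd in
lemma P_eq_sign_eval (n : ℕ) (hn : 1 ≤ n) :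
    P d a n = (-1 : K) ^ (d ^ (n - 1)) * (iter (X ^ d - C a) n).eval 0 := by
  induction n with
  | zero => omega
  | succ n ih =>
      rcases Nat.eq_or_lt_of_le hn with h1 | h1
      · -- n + 1 = 1
        have : n = 0 := by omega
        subst this
        show a = (-1 : K) ^ (d ^ 0) * _
        rw [iter_one]
        simp [zero_pow (show d ≠ 0 by omega)]
      · have hn1 : 1 ≤ n := by omega
        rw [P_succ a n hn1, ih hn1, eval_zero_succ]
        have hsign : ((-1 : K) ^ (d ^ (n - 1))) ^ d = (-1 : K) ^ (d ^ n) := by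
          rw [← pow_mul]
          congr 1
          rw [← pow_succ]
          congr 1
          omega
        have hd1 : (-1 : K) ^ (d - 1) = -(-1 : K) ^ (d ^ n) := by
          rcases Nat.even_or_odd d with hev | hod
          · have h2 : (-1 : K) ^ (d ^ n) = 1 := by
              have hdn : d ^ n = d * d ^ (n - 1) := by
                conv_lhs => rw [show n = 1 + (n - 1) by omega]
                rw [pow_add, pow_one]
              rw [hdn, pow_mul, hev.neg_one_pow, one_pow]
            have h3 : Odd (d - 1) := Nat.Even.sub_odd (by omega) hev odd_one
            rw [h2, h3.neg_one_pow]
          · have h1 : Even (d - 1) := by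
              rcases hod with ⟨k, hk⟩; exact ⟨k, by omega⟩
            rw [h1.neg_one_pow, (hod.pow).neg_one_pow]
            norm_num
        rw [mul_pow, hsign, hd1, Nat.add_sub_cancel]
        ring



section FF
variable {K : Type*} [Field K] [Fintype K]

lemma exists_pow_iff {ℓ : ℕ} (hl : ℓ ≠ 0) (hdvd : ℓ ∣ Fintype.card K - 1) {c : K} (hc : c ≠ 0) :
    (∃ y : K, y ^ ℓ = c) ↔ c ^ ((Fintype.card K - 1) / ℓ) = 1 := by
  classical
  constructor
  · rintro ⟨y, rfl⟩
    have hy : y ≠ 0 := by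
      rintro rfl
      exact hc (zero_pow hl)
    rw [← pow_mul, Nat.mul_div_cancel' hdvd]
    exact FiniteField.pow_card_sub_one_eq_one y hy
  · intro h1
    obtain ⟨g, hg⟩ := IsCyclic.exists_generator (α := Kˣ)
    set N := Fintype.card K - 1 with hN
    have hcard : Fintype.card Kˣ = N := Fintype.card_units K
    have horder : orderOf g = N := by
      rw [orderOf_eq_card_of_forall_mem_zpowers hg, Nat.card_eq_fintype_card, hcard]
    have hN0 : N ≠ 0 := by
      have := Fintype.one_lt_card (α := K)
      omega
    set cu : Kˣ := Units.mk0 c hc with hcu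
    obtain ⟨k, hk⟩ : ∃ k : ℕ, g ^ k = cu := by
      obtain ⟨k, hk⟩ := (mem_powers_iff_mem_zpowers).2 (hg cu)
      exact ⟨k, hk⟩
    have h1u : cu ^ (N / ℓ) = 1 := by
      ext
      push_cast [hcu]
      exact h1
    rw [← hk, ← pow_mul] at h1u
    have hdvd2 : N ∣ k * (N / ℓ) := by
      have h2 := orderOf_dvd_of_pow_eq_one h1u
      rwa [horder] at h2
    obtain ⟨m, hm⟩ := hdvd
    have hm' : N / ℓ = m := by
      rw [hm, Nat.mul_div_cancel_left _ (Nat.pos_of_ne_zero hl)]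
    have hm0 : m ≠ 0 := by
      rintro rfl
      simp at hm
      exact hN0 hm
    have hldvd : ℓ ∣ k := by
      rw [hm', hm] at hdvd2
      have := (Nat.mul_dvd_mul_iff_right (Nat.pos_of_ne_zero hm0)).1 hdvd2
      exact this
    obtain ⟨t, rfl⟩ := hldvd
    refine ⟨((g ^ t : Kˣ) : K), ?_⟩
    have : (g ^ t) ^ ℓ = cu := by
      rw [← pow_mul, mul_comm t ℓ]
      exact hk
    rw [← Units.val_pow_eq_pow_val, this]
    simp [hcu]

lemma mem_range_algebraMap_iff {L : Type*} [Field L] [Fintype L] [Algebra K L] (x : L) :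
    (∃ y : K, algebraMap K L y = x) ↔ x ^ Fintype.card K = x := by
  classical
  constructor
  · rintro ⟨y, rfl⟩
    rw [← map_pow, FiniteField.pow_card]
  · intro hx
    by_contra hnot
    push_neg at hnot
    have hq : 1 < Fintype.card K := Fintype.one_lt_card
    set p : L[X] := X ^ Fintype.card K - X with hp
    have hp0 : p ≠ 0 := FiniteField.X_pow_card_sub_X_ne_zero L hq
    have hdeg : p.natDegree = Fintype.card K := FiniteField.X_pow_card_sub_X_natDegree_eq L hq
    set T : Finset L := (Finset.univ : Finset K).image (algebraMap K L) with hT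
    have hTcard : T.card = Fintype.card K := by
      rw [hT, Finset.card_image_of_injective _ (algebraMap K L).injective, Finset.card_univ]
    have hroot : ∀ z ∈ insert x T, p.IsRoot z := by
      intro z hz
      rcases Finset.mem_insert.1 hz with rfl | hzT
      · simp [hp, IsRoot, hx]
      · obtain ⟨y, -, rfl⟩ := Finset.mem_image.1 hzT
        simp [hp, IsRoot, ← map_pow, FiniteField.pow_card]
    have hxT : x ∉ T := by
      intro hmem
      obtain ⟨y, -, hy⟩ := Finset.mem_image.1 hmem
      exact hnot y hy
    have hsub : insert x T ⊆ p.roots.toFinset := by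
      intro z hz
      rw [Multiset.mem_toFinset, mem_roots hp0]
      exact hroot z hz
    have h1 : Fintype.card K + 1 ≤ p.roots.toFinset.card := by
      have := Finset.card_le_card hsub
      rwa [Finset.card_insert_of_notMem hxT, hTcard] at this
    have h2 : p.roots.toFinset.card ≤ p.natDegree :=
      le_trans (Multiset.toFinset_card_le _) (Polynomial.card_roots' p)
    omega

lemma card_pow_image_le [DecidableEq K] (d : ℕ) :
    ((Finset.univ : Finset Kˣ).image (fun u : Kˣ => u ^ d)).card
      ≤ (Fintype.card K - 1) / Nat.gcd (Fintype.card K - 1) d := by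
  classical
  obtain ⟨g, hg⟩ := IsCyclic.exists_generator (α := Kˣ)
  set N := Fintype.card K - 1 with hN
  set δ := Nat.gcd N d with hδ
  have hcard : Fintype.card Kˣ = N := Fintype.card_units K
  have horder : orderOf g = N := by
    rw [orderOf_eq_card_of_forall_mem_zpowers hg, Nat.card_eq_fintype_card, hcard]
  have hδN : δ ∣ N := Nat.gcd_dvd_left _ _
  have hδd : δ ∣ d := Nat.gcd_dvd_right _ _
  have hsub : ((Finset.univ : Finset Kˣ).image (fun u : Kˣ => u ^ d)) ⊆
      (Subgroup.zpowers (g ^ δ) : Set Kˣ).toFinset := by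
    intro x hx
    simp only [Finset.mem_image] at hx
    obtain ⟨u, -, rfl⟩ := hx
    rw [Set.mem_toFinset]
    obtain ⟨k, hk⟩ := (mem_powers_iff_mem_zpowers).2 (hg u)
    obtain ⟨e, he⟩ := hδd
    rw [SetLike.mem_coe, Subgroup.mem_zpowers_iff]
    refine ⟨(k * e : ℕ), ?_⟩
    rw [zpow_natCast, ← pow_mul, ← hk, ← pow_mul]
    congr 1
    rw [he]
    ring
  calc ((Finset.univ : Finset Kˣ).image (fun u : Kˣ => u ^ d)).card
      ≤ ((Subgroup.zpowers (g ^ δ) : Set Kˣ).toFinset).card := Finset.card_le_card hsub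
    _ = Nat.card (Subgroup.zpowers (g ^ δ)) := by
        rw [Set.toFinset_card, Nat.card_eq_fintype_card]
        rfl
    _ = orderOf (g ^ δ) := Nat.card_zpowers _
    _ = N / δ := by
        rw [orderOf_pow, horder, Nat.gcd_eq_right hδN]

end FF


variable {K : Type*} [Field K]

lemma monic_eq_of_dvd {p q : K[X]} (hp : p.Monic) (hq : q.Monic) (hdvd : p ∣ q)
    (hdeg : q.natDegree ≤ p.natDegree) : p = q := by
  obtain ⟨v, hv⟩ := hdvd
  have hq0 : q ≠ 0 := hq.ne_zero
  have hv0 : v ≠ 0 := by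
    rintro rfl
    rw [mul_zero] at hv
    exact hq0 hv
  have hdeg2 : q.natDegree = p.natDegree + v.natDegree := by
    rw [hv, natDegree_mul hp.ne_zero hv0]
  have hvdeg : v.natDegree = 0 := by omega
  obtain ⟨c, rfl⟩ := natDegree_eq_zero.1 hvdeg
  have hc : p.leadingCoeff * c = 1 := by
    have := hq.leadingCoeff
    rw [hv, leadingCoeff_mul, leadingCoeff_C] at this
    exact this
  rw [hp.leadingCoeff, one_mul] at hc
  rw [hv, hc, map_one, mul_one]

theorem irreducible_comp {g f : K[X]} (hgm : g.Monic) (hg : Irreducible g)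
    (hfm : f.Monic) (hf0 : 0 < f.natDegree) :
    Irreducible (g.comp f) ↔
      Irreducible (f.map (algebraMap K (AdjoinRoot g)) - C (AdjoinRoot.root g)) := by
  haveI := Fact.mk hg
  have hg0 : g ≠ 0 := hgm.ne_zero
  have hgd : 0 < g.natDegree := hg.natDegree_pos
  have hcm : (g.comp f).Monic := hgm.comp hfm (by omega)
  have hcdeg : (g.comp f).natDegree = g.natDegree * f.natDegree := natDegree_comp
  -- monicity of the shifted polynomial, for a general algebra map
  have hhmonic : ∀ (L : Type _) [Field L] [Algebra K L] (β : L),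
      (f.map (algebraMap K L) - C β).Monic := by
    intro L _ _ β
    rw [sub_eq_add_neg]
    refine (hfm.map (algebraMap K L)).add_of_left ?_
    rw [degree_neg]
    refine lt_of_le_of_lt degree_C_le ?_
    exact natDegree_pos_iff_degree_pos.mp (by rw [natDegree_map]; exact hf0)
  haveI : FiniteDimensional K (AdjoinRoot g) := (AdjoinRoot.powerBasis hg0).finite
  have hfrL : Module.finrank K (AdjoinRoot g) = g.natDegree := by
    rw [(AdjoinRoot.powerBasis hg0).finrank, AdjoinRoot.powerBasis_dim]
  constructor
  · intro hcomp
    have hnu : ¬ IsUnit (f.map (algebraMap K (AdjoinRoot g)) - C (AdjoinRoot.root g)) := by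
      refine not_isUnit_of_natDegree_pos _ ?_
      rw [natDegree_sub_C, natDegree_map]
      exact hf0
    obtain ⟨h₁, h₁m, h₁irr, h₁dvd⟩ := exists_monic_irreducible_factor _ hnu
    haveI := Fact.mk h₁irr
    set M := AdjoinRoot h₁ with hM
    set α := AdjoinRoot.root h₁ with hα
    have h₁0 : h₁ ≠ 0 := h₁m.ne_zero
    haveI : FiniteDimensional (AdjoinRoot g) M := (AdjoinRoot.powerBasis h₁0).finite
    have hfrM : Module.finrank (AdjoinRoot g) M = h₁.natDegree := by
      rw [(AdjoinRoot.powerBasis h₁0).finrank, AdjoinRoot.powerBasis_dim]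
    haveI : FiniteDimensional K M := FiniteDimensional.trans K (AdjoinRoot g) M
    have hroot : aeval α (f.map (algebraMap K (AdjoinRoot g)) - C (AdjoinRoot.root g)) = 0 := by
      obtain ⟨v, hv⟩ := h₁dvd
      rw [hv, map_mul, AdjoinRoot.aeval_eq, AdjoinRoot.mk_self, zero_mul]
    have haef : aeval α f = algebraMap (AdjoinRoot g) M (AdjoinRoot.root g) := by
      rw [map_sub, aeval_map_algebraMap, aeval_C, sub_eq_zero] at hroot
      exact hroot
    have hcomproot : aeval α (g.comp f) = 0 := by
      rw [aeval_comp, haef, aeval_algebraMap_apply, AdjoinRoot.aeval_eq, AdjoinRoot.mk_self,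
        map_zero]
    have hmin : g.comp f = minpoly K α :=
      minpoly.eq_of_irreducible_of_monic hcomp hcomproot hcm
    have hint : IsIntegral K α := ⟨g.comp f, hcm, hcomproot⟩
    have h1 : Module.finrank K K⟮α⟯ = g.natDegree * f.natDegree := by
      rw [IntermediateField.adjoin.finrank hint, ← hmin, natDegree_comp]
    have h3 : Module.finrank K K⟮α⟯ ≤ Module.finrank K M := K⟮α⟯.toSubmodule.finrank_le
    have h2 : Module.finrank K M = g.natDegree * h₁.natDegree := by
      rw [← Module.finrank_mul_finrank K (AdjoinRoot g) M, hfrL, hfrM]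
    have hge : f.natDegree ≤ h₁.natDegree := by
      rw [h1, h2] at h3
      exact Nat.le_of_mul_le_mul_left h3 hgd
    have hle : h₁.natDegree ≤ (f.map (algebraMap K (AdjoinRoot g)) - C (AdjoinRoot.root g)).natDegree :=
      natDegree_le_of_dvd h₁dvd (hhmonic _ _).ne_zero
    rw [natDegree_sub_C, natDegree_map] at hle
    have heq : h₁ = f.map (algebraMap K (AdjoinRoot g)) - C (AdjoinRoot.root g) := by
      refine monic_eq_of_dvd h₁m (hhmonic _ _) h₁dvd ?_
      rw [natDegree_sub_C, natDegree_map]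
      omega
    rwa [← heq]
  · intro hh
    have hnu : ¬ IsUnit (g.comp f) := by
      refine not_isUnit_of_natDegree_pos _ ?_
      rw [hcdeg]
      positivity
    obtain ⟨u, hum, huirr, hudvd⟩ := exists_monic_irreducible_factor _ hnu
    haveI := Fact.mk huirr
    set M := AdjoinRoot u with hM
    set α := AdjoinRoot.root u with hα
    have hu0 : u ≠ 0 := hum.ne_zero
    haveI : FiniteDimensional K M := (AdjoinRoot.powerBasis hu0).finite
    have hfrM : Module.finrank K M = u.natDegree := by
      rw [(AdjoinRoot.powerBasis hu0).finrank, AdjoinRoot.powerBasis_dim]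
    have huroot : aeval α (g.comp f) = 0 := by
      obtain ⟨v, hv⟩ := hudvd
      rw [hv, map_mul, AdjoinRoot.aeval_eq, AdjoinRoot.mk_self, zero_mul]
    set β₁ := aeval α f with hβ₁
    have hgroot : aeval β₁ g = 0 := by
      rw [hβ₁, ← aeval_comp]
      exact huroot
    have hβint : IsIntegral K β₁ := ⟨g, hgm, hgroot⟩
    have hminβ : g = minpoly K β₁ := minpoly.eq_of_irreducible_of_monic hg hgroot hgm
    rw [hminβ] at hh
    set e := IntermediateField.adjoinRootEquivAdjoin K hβint with he
    have hhE : Irreducible (f.map (algebraMap K K⟮β₁⟯) - C (IntermediateField.AdjoinSimple.gen K β₁)) := by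
      have h5 := (MulEquiv.irreducible_iff (Polynomial.mapEquiv (e.toRingEquiv))).2 hh
      rw [mapEquiv_apply] at h5
      convert h5 using 2
      rw [Polynomial.map_sub, Polynomial.map_map, Polynomial.map_C]
      congr 1
      · congr 1
        exact RingHom.ext fun x => (e.commutes x).symm
      · exact congrArg C (IntermediateField.adjoinRootEquivAdjoin_apply_root K hβint).symm
    have haev : aeval α (f.map (algebraMap K K⟮β₁⟯) - C (IntermediateField.AdjoinSimple.gen K β₁)) = 0 := by
      rw [map_sub, aeval_map_algebraMap, aeval_C, IntermediateField.AdjoinSimple.algebraMap_gen,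
        hβ₁, sub_self]
    have hminE : f.map (algebraMap K K⟮β₁⟯) - C (IntermediateField.AdjoinSimple.gen K β₁)
        = minpoly K⟮β₁⟯ α := minpoly.eq_of_irreducible_of_monic hhE haev (hhmonic _ _)
    have hintα : IsIntegral K⟮β₁⟯ α := ⟨_, hhmonic _ _, haev⟩
    have hr1 : Module.finrank K⟮β₁⟯ K⟮β₁⟯⟮α⟯ = f.natDegree := by
      rw [IntermediateField.adjoin.finrank hintα, ← hminE, natDegree_sub_C, natDegree_map]
    have hr2 : Module.finrank K K⟮β₁⟯ = g.natDegree := by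
      rw [IntermediateField.adjoin.finrank hβint, ← hminβ]
    have hr3 : Module.finrank K K⟮β₁⟯ * Module.finrank K⟮β₁⟯ K⟮β₁⟯⟮α⟯
        = Module.finrank K K⟮β₁⟯⟮α⟯ := Module.finrank_mul_finrank K K⟮β₁⟯ K⟮β₁⟯⟮α⟯
    have hr4 : Module.finrank K K⟮β₁⟯⟮α⟯ ≤ Module.finrank K M :=
      (IntermediateField.restrictScalars K K⟮β₁⟯⟮α⟯).toSubmodule.finrank_le
    have hdegle : (g.comp f).natDegree ≤ u.natDegree := by
      rw [hcdeg, ← hfrM]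
      calc g.natDegree * f.natDegree = Module.finrank K K⟮β₁⟯⟮α⟯ := by rw [← hr3, hr1, hr2]
        _ ≤ Module.finrank K M := hr4
    have heq : u = g.comp f := monic_eq_of_dvd hum hcm hudvd hdegle
    rwa [← heq]



variable {K : Type*} [Field K] [Fintype K]

lemma geom_nat (q m : ℕ) (hq : 1 ≤ q) :
    (q - 1) * (∑ i ∈ Finset.range m, q ^ i) = q ^ m - 1 := by
  induction m with
  | zero => simp
  | succ m ih =>
      rw [Finset.sum_range_succ, Nat.mul_add, ih]
      have h1 : 1 ≤ q ^ m := Nat.one_le_pow _ _ hq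
      have h2 : q ^ (m + 1) = q * q ^ m := by rw [pow_succ]; ring
      have h3 : (q - 1) * q ^ m = q * q ^ m - q ^ m := by rw [Nat.sub_mul, one_mul]
      have h4 : q ^ m ≤ q * q ^ m := Nat.le_mul_of_pos_left _ (by omega)
      omega

-- helper from earlier part (restated here for compile testing; will be merged)


theorem norm_eval {g : K[X]} (hgm : g.Monic) (hg : Irreducible g) (a : K) :
    (algebraMap K (AdjoinRoot g) a + AdjoinRoot.root g) ^
        ((Fintype.card K ^ g.natDegree - 1) / (Fintype.card K - 1))
      = algebraMap K (AdjoinRoot g) ((-1) ^ g.natDegree * g.eval (-a)) := by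
  classical
  haveI := Fact.mk hg
  have hg0 : g ≠ 0 := hgm.ne_zero
  have hm : 0 < g.natDegree := hg.natDegree_pos
  set m := g.natDegree with hmdef
  set L := AdjoinRoot g with hLdef
  set φ := algebraMap K L with hφdef
  set β := AdjoinRoot.root g with hβdef
  haveI : FiniteDimensional K L := (AdjoinRoot.powerBasis hg0).finite
  haveI : Finite L := Module.finite_of_finite K
  haveI : Fintype L := Fintype.ofFinite _
  set q := Fintype.card K with hqdef
  have hq1 : 1 < q := Fintype.one_lt_card
  have hcardL : Fintype.card L = q ^ m := by
    rw [Module.card_eq_pow_finrank (K := K) (V := L), (AdjoinRoot.powerBasis hg0).finrank,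
      AdjoinRoot.powerBasis_dim]
  obtain ⟨p, hcp⟩ := CharP.exists K
  haveI := hcp
  obtain ⟨n, hpp, hn⟩ := FiniteField.card K p
  haveI : CharP L p := charP_of_injective_algebraMap (algebraMap K L).injective p
  haveI := Fact.mk hpp
  -- the power map x ↦ x ^ q as a ring hom on L
  set ψ : L →+* L := iterateFrobenius L p n with hψdef
  have hψ : ∀ x : L, ψ x = x ^ q := by
    intro x
    rw [hψdef, iterateFrobenius_def, ← hn]
  have haddpow : ∀ (i : ℕ) (x y : L), (x + y) ^ q ^ i = x ^ q ^ i + y ^ q ^ i := by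
    intro i x y
    have hqpn : q = p ^ (n : ℕ) := hn
    rw [hqpn, ← pow_mul, add_pow_char_pow, pow_mul]
  -- the conjugate product polynomial
  set h : L[X] := ∏ i ∈ Finset.range m, (X - C (β ^ q ^ i)) with hhdef
  have hmonich : h.Monic := monic_prod_of_monic _ _ fun i _ => monic_X_sub_C _
  have hdegh : h.natDegree = m := by
    rw [hhdef, natDegree_prod _ _ fun i _ => (monic_X_sub_C (β ^ q ^ i)).ne_zero]
    simp only [natDegree_X_sub_C]
    rw [Finset.sum_const, Finset.card_range, smul_eq_mul, mul_one]
  -- h is fixed by ψ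
  have hβq : β ^ q ^ m = β := by
    rw [← hcardL]
    exact FiniteField.pow_card β
  have hmapψ : h.map ψ = h := by
    rw [hhdef, Polynomial.map_prod]
    have heach : ∀ i, (X - C (β ^ q ^ i)).map ψ = X - C (β ^ q ^ (i + 1)) := by
      intro i
      rw [Polynomial.map_sub, map_X, map_C, hψ, ← pow_mul, ← pow_succ]
    simp only [heach]
    -- reindexing: ∏ i in range m, F (i+1) = ∏ i in range m, F i
    set F : ℕ → L[X] := fun i => X - C (β ^ q ^ i) with hF
    have hFm : F m = F 0 := by
      simp only [hF, hβq, pow_zero, pow_one]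
    have h1 : ∏ i ∈ Finset.range m, F (i + 1) = ∏ i ∈ Finset.Ico 1 (m + 1), F i := by
      rw [Finset.prod_Ico_eq_prod_range]
      simp only [Nat.add_sub_cancel]
      exact Finset.prod_congr rfl fun i _ => by rw [add_comm]
    have h2 : ∏ i ∈ Finset.Ico 1 (m + 1), F i = (∏ i ∈ Finset.Ico 1 m, F i) * F m :=
      Finset.prod_Ico_succ_top (by omega) F
    have h3 : ∏ i ∈ Finset.range m, F i = F 0 * ∏ i ∈ Finset.Ico 1 m, F i := by
      rw [Finset.range_eq_Ico]
      exact Finset.prod_eq_prod_Ico_succ_bot hm F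
    rw [h1, h2, h3, hFm, mul_comm]
  -- coefficients of h lie in the image of K
  have hlift : ∃ h₀ : K[X], h₀.map φ = h := by
    rw [← Polynomial.mem_lifts]
    rw [Polynomial.lifts_iff_coeff_lifts]
    intro j
    have : (h.coeff j) ^ q = h.coeff j := by
      conv_rhs => rw [← hmapψ]
      rw [Polynomial.coeff_map, hψ]
    obtain ⟨y, hy⟩ := (mem_range_algebraMap_iff (K := K) (h.coeff j)).2 this
    exact ⟨y, hy⟩
  obtain ⟨h₀, hh₀⟩ := hlift
  have hdeg₀ : h₀.natDegree = m := by
    rw [← hdegh, ← hh₀, natDegree_map]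
  have hmonic₀ : h₀.Monic := by
    have : φ (h₀.coeff (h₀.natDegree)) = 1 := by
      have h6 : (h₀.map φ).coeff ((h₀.map φ).natDegree) = 1 := by
        rw [hh₀]
        exact hmonich
      rw [natDegree_map, Polynomial.coeff_map] at h6
      exact h6
    have h7 := (algebraMap K L).injective (by rw [this, map_one] : φ (h₀.coeff h₀.natDegree) = φ 1)
    exact h7
  -- β is a root of h₀, so g ∣ h₀, hence g = h₀ (degrees match)
  have hrooth : h.eval β = 0 := by
    rw [hhdef, Polynomial.eval_prod]
    refine Finset.prod_eq_zero (Finset.mem_range.2 hm) ?_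
    simp
  have haeval₀ : (aeval β) h₀ = 0 := by
    rw [aeval_def, ← eval_map, hh₀]
    exact hrooth
  have hminβ : minpoly K β = g := by
    rw [hβdef, AdjoinRoot.minpoly_root hg0, hgm.leadingCoeff]
    simp
  have hdvd : g ∣ h₀ := by
    rw [← hminβ]
    exact minpoly.dvd K β haeval₀
  have hgh₀ : g = h₀ := monic_eq_of_dvd hgm hmonic₀ hdvd (by rw [hdeg₀])
  -- now evaluate
  have hs : (q ^ m - 1) / (q - 1) = ∑ i ∈ Finset.range m, q ^ i := by
    rw [← geom_nat q m (by omega)]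
    rw [Nat.mul_div_cancel_left _ (by omega : 0 < q - 1)]
  have hapow : ∀ i : ℕ, (φ a) ^ q ^ i = φ a := by
    intro i
    rw [← map_pow, FiniteField.pow_card_pow]
  have hν : (φ a + β) ^ ((q ^ m - 1) / (q - 1)) = ∏ i ∈ Finset.range m, (φ a + β ^ q ^ i) := by
    rw [hs, ← Finset.prod_pow_eq_pow_sum]
    exact Finset.prod_congr rfl fun i _ => by rw [haddpow, hapow]
  have heval : h.eval (-(φ a)) = (-1) ^ m * ∏ i ∈ Finset.range m, (φ a + β ^ q ^ i) := by
    rw [hhdef, Polynomial.eval_prod]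
    have : ∀ i ∈ Finset.range m, (X - C (β ^ q ^ i)).eval (-(φ a)) = -1 * (φ a + β ^ q ^ i) := by
      intro i _
      simp
      ring
    rw [Finset.prod_congr rfl this, Finset.prod_mul_distrib, Finset.prod_const, Finset.card_range]
  have h8 : φ (h₀.eval (-a)) = h.eval (-(φ a)) := by
    rw [← hh₀, eval_map, ← map_neg φ a]
    exact (Polynomial.eval₂_at_apply φ (-a)).symm
  have hfinal : φ (g.eval (-a)) = h.eval (-(φ a)) :=
    (congrArg (fun t : K[X] => φ (t.eval (-a))) hgh₀).trans h8
  rw [hν, map_mul, hfinal, heval, map_pow, map_neg, map_one]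
  rw [← mul_assoc, ← mul_pow]
  simp


variable {K : Type*} [Field K] [Fintype K] {d : ℕ}

lemma prime_dvd_card_sub_one (hd : 2 ≤ d) {a : K} (ha : a ≠ 0)
    (hirr : Irreducible (X ^ d - C a)) {ℓ : ℕ} (hℓ : ℓ.Prime) (hℓd : ℓ ∣ d) :
    ℓ ∣ Fintype.card K - 1 := by
  classical
  by_contra hnd
  have hcop : (Nat.card Kˣ).Coprime ℓ := by
    rw [Nat.card_eq_fintype_card, Fintype.card_units K]
    exact ((Nat.Prime.coprime_iff_not_dvd hℓ).2 hnd).symm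
  obtain ⟨u, hu⟩ := (powCoprime hcop).surjective (Units.mk0 a ha)
  have hu' : ((u : K)) ^ ℓ = a := by
    have h1 : ((u ^ ℓ : Kˣ) : K) = ((Units.mk0 a ha : Kˣ) : K) := by
      rw [show u ^ ℓ = powCoprime hcop u from rfl, hu]
    simpa using h1
  have hdvd : (X ^ (d / ℓ) - C (u : K)) ∣ (X ^ d - C a) := by
    have h1 := sub_dvd_pow_sub_pow (X ^ (d / ℓ) : K[X]) (C (u : K)) ℓ
    rwa [← pow_mul, Nat.div_mul_cancel hℓd, ← map_pow, hu'] at h1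
  obtain ⟨v, hv⟩ := hdvd
  have hd0 : 0 < d := by omega
  have hdl_pos : 0 < d / ℓ := Nat.div_pos (Nat.le_of_dvd hd0 hℓd) hℓ.pos
  have hdl_lt : d / ℓ < d := Nat.div_lt_self hd0 hℓ.one_lt
  rcases hirr.isUnit_or_isUnit hv with h | h
  · exact not_isUnit_of_natDegree_pos _ (by rw [natDegree_X_pow_sub_C]; exact hdl_pos) h
  · have hv0 : v ≠ 0 := fun h0 => by simp [h0] at h
    have hX0 : (X ^ (d / ℓ) - C (u : K)) ≠ 0 := (monic_X_pow_sub_C _ (by omega)).ne_zero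
    have hdeg := congrArg natDegree hv
    rw [natDegree_X_pow_sub_C, natDegree_mul hX0 hv0, natDegree_X_pow_sub_C,
      natDegree_eq_zero_of_isUnit h] at hdeg
    omega


theorem X_pow_sub_C_irr_of_conditions (hd : 2 ≤ d) (hd4 : ¬(4 ∣ d))
    {L : Type*} [Field L] [Fintype L] {c : L} (hc : c ≠ 0)
    (hcond : ∀ ℓ : ℕ, ℓ.Prime → ℓ ∣ d →
      ℓ ∣ Fintype.card L - 1 ∧ c ^ ((Fintype.card L - 1) / ℓ) ≠ 1) :
    Irreducible (X ^ d - C c) := by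
  classical
  set Q := Fintype.card L with hQdef
  have hQ1 : 1 < Q := Fintype.one_lt_card
  have hpow : ∀ ℓ : ℕ, ℓ.Prime → ℓ ∣ d → ∀ b : L, b ^ ℓ ≠ c := by
    intro ℓ hℓ hℓd b hb
    obtain ⟨hdvd, hne⟩ := hcond ℓ hℓ hℓd
    apply hne
    have hb0 : b ≠ 0 := by
      rintro rfl
      exact hc (by rw [← hb, zero_pow hℓ.ne_zero])
    rw [← hb, ← pow_mul, Nat.mul_div_cancel' hdvd]
    exact FiniteField.pow_card_sub_one_eq_one b hb0
  rcases Nat.even_or_odd d with hev | hod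
  swap
  · exact X_pow_sub_C_irreducible_of_odd hod hpow
  obtain ⟨u', hu'⟩ := hev
  have hdu : d = 2 * (d / 2) := by omega
  set u := d / 2 with hudef
  have huodd : Odd u := by
    rcases Nat.even_or_odd u with h | h
    · exfalso
      obtain ⟨w, hw⟩ := h
      exact hd4 ⟨w, by omega⟩
    · exact h
  have hu0 : 0 < u := by omega
  have h2d : 2 ∣ d := ⟨u, hdu⟩
  have h2 : Irreducible (X ^ 2 - C c) :=
    X_pow_sub_C_irreducible_of_prime Nat.prime_two (hpow 2 Nat.prime_two h2d)
  haveI := Fact.mk h2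
  set L₂ := AdjoinRoot (X ^ 2 - C c) with hL₂
  set γ : L₂ := AdjoinRoot.root (X ^ 2 - C c) with hγ
  set φ₂ : L →+* L₂ := algebraMap L L₂ with hφ₂
  have hmonic2 : (X ^ 2 - C c).Monic := monic_X_pow_sub_C c (by omega)
  have h20 : (X ^ 2 - C c) ≠ 0 := hmonic2.ne_zero
  haveI : FiniteDimensional L L₂ := (AdjoinRoot.powerBasis h20).finite
  haveI : Finite L₂ := Module.finite_of_finite L
  haveI : Fintype L₂ := Fintype.ofFinite _
  have hcard2 : Fintype.card L₂ = Q ^ 2 := by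
    rw [Module.card_eq_pow_finrank (K := L) (V := L₂), (AdjoinRoot.powerBasis h20).finrank,
      AdjoinRoot.powerBasis_dim, natDegree_X_pow_sub_C]
  have hγ2 : γ ^ 2 = φ₂ c := by
    have h0 := AdjoinRoot.eval₂_root (X ^ 2 - C c)
    rw [eval₂_sub, eval₂_pow, eval₂_X, eval₂_C, sub_eq_zero] at h0
    exact h0
  have hγ0 : γ ≠ 0 := by
    intro h0
    apply hc
    have h5 : φ₂ c = 0 := by rw [← hγ2, h0]; ring
    exact (_root_.map_eq_zero φ₂).1 h5
  have hQodd : 2 ∣ Q - 1 := (hcond 2 Nat.prime_two h2d).1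
  have hpowγ : ∀ ℓ : ℕ, ℓ.Prime → ℓ ∣ u → ∀ b : L₂, b ^ ℓ ≠ γ := by
    intro ℓ hℓ hℓu b hb
    have hℓd : ℓ ∣ d := Dvd.dvd.trans hℓu ⟨2, by omega⟩
    obtain ⟨hℓq, hcne⟩ := hcond ℓ hℓ hℓd
    have hℓodd : ℓ ≠ 2 := by
      rintro rfl
      rcases huodd with ⟨w, hw⟩
      obtain ⟨v, hv⟩ := hℓu
      omega
    have hb0 : b ≠ 0 := by
      rintro rfl
      exact hγ0 (by rw [← hb, zero_pow hℓ.ne_zero])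
    have hℓQ : ℓ ∣ Q - 1 := hℓq
    obtain ⟨t, ht⟩ := hℓq
    obtain ⟨w, hw⟩ := hQodd
    have hQp1 : Q + 1 = 2 * (w + 1) := by omega
    have hexp : Q ^ 2 - 1 = (Q - 1) * (Q + 1) := by
      have h5 : Q ^ 2 = Q * Q := sq Q
      rw [h5, Nat.sub_mul, Nat.one_mul, Nat.mul_add, Nat.mul_one]
      omega
    have hdvd2 : ℓ ∣ Q ^ 2 - 1 := by
      rw [hexp, ht]
      exact ⟨t * (Q + 1), by ring⟩
    have hγ1 : γ ^ ((Q ^ 2 - 1) / ℓ) = 1 := by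
      rw [← hb, ← pow_mul, Nat.mul_div_cancel' hdvd2, ← hcard2]
      exact FiniteField.pow_card_sub_one_eq_one b hb0
    have hdivexp : (Q ^ 2 - 1) / ℓ = t * (Q + 1) := by
      rw [hexp, ht, mul_assoc, Nat.mul_div_cancel_left _ hℓ.pos]
    rw [hdivexp] at hγ1
    have hexp2 : t * (Q + 1) = 2 * (t * (w + 1)) := by rw [hQp1]; ring
    rw [hexp2, pow_mul, hγ2, ← map_pow] at hγ1
    have hc1 : c ^ (t * (w + 1)) = 1 := by
      apply φ₂.injective
      rw [hγ1, map_one]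
    have hct : c ^ t ≠ 1 := by
      have h5 : (Q - 1) / ℓ = t := by rw [ht, Nat.mul_div_cancel_left _ hℓ.pos]
      rwa [h5] at hcne
    have hordc : orderOf (c ^ t) = ℓ := by
      have h5 : (c ^ t) ^ ℓ = 1 := by
        rw [← pow_mul, mul_comm t ℓ, ← ht]
        exact FiniteField.pow_card_sub_one_eq_one c hc
      have h6 := orderOf_dvd_of_pow_eq_one h5
      rcases (Nat.Prime.eq_one_or_self_of_dvd hℓ _ h6) with h7 | h7
      · exact absurd (orderOf_eq_one_iff.1 h7) hct
      · exact h7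
    have h6 : (c ^ t) ^ (w + 1) = 1 := by rw [← pow_mul]; exact hc1
    have h7 : ℓ ∣ w + 1 := by
      have := orderOf_dvd_of_pow_eq_one h6
      rwa [hordc] at this
    have h8 : ℓ ∣ Q + 1 := by
      rw [hQp1]
      exact Dvd.dvd.mul_left h7 2
    have h9 : ℓ ∣ 2 := by
      have h10 := Nat.dvd_sub h8 hℓQ
      rwa [show Q + 1 - (Q - 1) = 2 by omega] at h10
    rcases (Nat.Prime.eq_one_or_self_of_dvd Nat.prime_two _ h9) with h10 | h10
    · exact hℓ.ne_one h10
    · exact hℓodd h10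
  have hodd2 : Irreducible (X ^ u - C γ) := X_pow_sub_C_irreducible_of_odd huodd hpowγ
  have hmapXu : ((X : L[X]) ^ u).map φ₂ - C γ = X ^ u - C γ := by
    rw [Polynomial.map_pow, map_X]
  have h10 : Irreducible ((X ^ 2 - C c).comp (X ^ u)) := by
    refine (irreducible_comp hmonic2 h2 (monic_X_pow u) ?_).2 ?_
    · rw [natDegree_X_pow]; omega
    · rw [hmapXu]; exact hodd2
  have h11 : (X ^ 2 - C c).comp ((X : L[X]) ^ u) = X ^ d - C c := by
    rw [sub_comp, pow_comp, X_comp, C_comp, ← pow_mul]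
    congr 2
    omega
  rwa [h11] at h10


section Crit
variable {K : Type*} [Field K] [Fintype K] {d : ℕ}

theorem crit (hd : 2 ≤ d) (hd4 : ¬(4 ∣ d)) (a : K)
    (hprime : ∀ ℓ : ℕ, ℓ.Prime → ℓ ∣ d → ℓ ∣ Fintype.card K - 1)
    {n : ℕ} (hn : 1 ≤ n) (hgirr : Irreducible (iter (X ^ d - C a) n))
    (hPne : P d a (n + 1) ≠ 0) :
    Irreducible (iter (X ^ d - C a) (n + 1)) ↔
      ∀ ℓ : ℕ, ℓ.Prime → ℓ ∣ d → ∀ y : K, y ^ ℓ ≠ P d a (n + 1) := by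
  classical
  set q := Fintype.card K with hq
  have hq1 : 1 < q := Fintype.one_lt_card
  set g := iter (X ^ d - C a) n with hgdef
  have hgm : g.Monic := iter_monic hd a n
  have hgdeg0 : g.natDegree = d ^ n := iter_natDegree a n
  set m := g.natDegree with hm
  have hgdeg : m = d ^ n := hgdeg0
  have hm0 : m ≠ 0 := by
    have : 0 < d ^ n := pow_pos (by omega) n
    omega
  haveI := Fact.mk hgirr
  set L := AdjoinRoot g with hL
  set φ := algebraMap K L with hφ
  set β := AdjoinRoot.root g with hβ
  have hg0 : g ≠ 0 := hgm.ne_zero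
  haveI : FiniteDimensional K L := (AdjoinRoot.powerBasis hg0).finite
  haveI : Finite L := Module.finite_of_finite K
  haveI : Fintype L := Fintype.ofFinite _
  have hcardL : Fintype.card L = q ^ m := by
    rw [Module.card_eq_pow_finrank (K := K) (V := L), (AdjoinRoot.powerBasis hg0).finrank,
      AdjoinRoot.powerBasis_dim]
  have hPval : P d a (n + 1) = (-1 : K) ^ m * g.eval (-a) := by
    have h1 := P_eq_sign_eval hd a (n + 1) (by omega)
    rw [Nat.add_sub_cancel] at h1
    rw [h1, eval_neg_a hd a n, ← hgdef, ← hgdeg]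
  set c : L := φ a + β with hc
  have hnorm : c ^ ((q ^ m - 1) / (q - 1)) = φ (P d a (n + 1)) := by
    rw [hPval]
    exact norm_eval hgm hgirr a
  have hgeom : (q - 1) * (∑ i ∈ Finset.range m, q ^ i) = q ^ m - 1 :=
    geom_nat q m (by omega)
  set s := ∑ i ∈ Finset.range m, q ^ i with hs
  have hsval : (q ^ m - 1) / (q - 1) = s := by
    rw [← hgeom, Nat.mul_div_cancel_left _ (by omega : 0 < q - 1)]
  have hQ1 : Fintype.card L - 1 = (q - 1) * s := by rw [hcardL, ← hgeom]
  have hqQ : (q - 1) ∣ (Fintype.card L - 1) := ⟨s, hQ1⟩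
  have hs0 : s ≠ 0 := by
    have h2 : q ≤ q ^ m := Nat.le_self_pow hm0 q
    intro h3
    rw [h3] at hsval
    have h4 : q - 1 ≤ q ^ m - 1 := by omega
    have h5 := Nat.one_le_div_iff (by omega : 0 < q - 1) |>.2 h4
    omega
  have hcs : c ^ s = φ (P d a (n + 1)) := by rw [← hsval]; exact hnorm
  have hcne : c ≠ 0 := by
    intro h0
    apply hPne
    have h1 := hcs
    rw [h0, zero_pow hs0] at h1
    exact ((_root_.map_eq_zero φ).1 h1.symm)
  have hbridge : ∀ ℓ : ℕ, ℓ.Prime → ℓ ∣ d →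
      (c ^ ((Fintype.card L - 1) / ℓ) = 1 ↔ (P d a (n + 1)) ^ ((q - 1) / ℓ) = 1) := by
    intro ℓ hℓ hℓd
    have hℓq : ℓ ∣ q - 1 := hprime ℓ hℓ hℓd
    obtain ⟨t, ht⟩ := hℓq
    have ht' : (q - 1) / ℓ = t := by rw [ht, Nat.mul_div_cancel_left _ hℓ.pos]
    have hdivL : (Fintype.card L - 1) / ℓ = t * s := by
      rw [hQ1, ht, mul_assoc, Nat.mul_div_cancel_left _ hℓ.pos]
    rw [hdivL, ht', mul_comm t s, pow_mul, hcs, ← map_pow]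
    constructor
    · intro h1
      exact φ.injective (by rw [h1, map_one])
    · intro h1
      rw [h1, map_one]
  have hiterseq : iter (X ^ d - C a) (n + 1) = g.comp (X ^ d - C a) := rfl
  have hfm : (X ^ d - C a : K[X]).Monic := monic_X_pow_sub_C a (by omega)
  have hmapf : (X ^ d - C a : K[X]).map φ - C β = X ^ d - C c := by
    rw [Polynomial.map_sub, Polynomial.map_pow, map_X, map_C, hc, C_add, sub_sub]
  have hcompiff := irreducible_comp hgm hgirr hfm
    (by rw [natDegree_X_pow_sub_C]; omega)
  rw [hiterseq, hcompiff, hmapf]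
  constructor
  · intro hI ℓ hℓ hℓd y hy
    have h1 : ∀ b : L, b ^ ℓ ≠ c := fun b =>
      pow_ne_of_irreducible_X_pow_sub_C hI hℓd hℓ.ne_one b
    have hℓQ : ℓ ∣ Fintype.card L - 1 := (hprime ℓ hℓ hℓd).trans hqQ
    have h2 : c ^ ((Fintype.card L - 1) / ℓ) ≠ 1 := by
      intro h3
      obtain ⟨b, hb⟩ := (exists_pow_iff hℓ.ne_zero hℓQ hcne).2 h3
      exact h1 b hb
    apply h2
    rw [hbridge ℓ hℓ hℓd]
    have hy0 : y ≠ 0 := by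
      rintro rfl
      exact hPne (by rw [← hy, zero_pow hℓ.ne_zero])
    rw [← hy, ← pow_mul, Nat.mul_div_cancel' (hprime ℓ hℓ hℓd)]
    exact FiniteField.pow_card_sub_one_eq_one y hy0
  · intro hcond
    refine X_pow_sub_C_irr_of_conditions hd hd4 hcne ?_
    intro ℓ hℓ hℓd
    have hℓq := hprime ℓ hℓ hℓd
    have hℓQ : ℓ ∣ Fintype.card L - 1 := hℓq.trans hqQ
    refine ⟨hℓQ, ?_⟩
    intro h3
    rw [hbridge ℓ hℓ hℓd] at h3
    obtain ⟨y, hy⟩ := (exists_pow_iff hℓ.ne_zero hℓq hPne).2 h3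
    exact hcond ℓ hℓ hℓd y hy

end Crit

end Aux18

open Aux18

theorem stmt18 (q d : ℕ) (hd : 2 ≤ d) (hd4 : ¬ (4 ∣ d))
    (F : Type*) [Field F] [Fintype F] (hF : Fintype.card F = q)
    (a : F) (ha : a ≠ 0)
    (hP : ∀ n : ℕ, 1 ≤ n → P d a n ≠ 0)
    (hirr : ∀ n : ℕ, 1 ≤ n → n ≤ (q - 1) / Nat.gcd (q - 1) d + 1 →
      Irreducible (iter (X ^ d - C a : F[X]) n)) :
    ∀ n : ℕ, 1 ≤ n → Irreducible (iter (X ^ d - C a : F[X]) n) := by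
  classical
  subst hF
  set q := Fintype.card F with hq
  have hq1 : 1 < q := Fintype.one_lt_card
  set δ := Nat.gcd (q - 1) d with hδ
  set N := (q - 1) / δ + 1 with hN
  have hδ1 : 1 ≤ δ := Nat.gcd_pos_of_pos_left _ (by omega)
  have hδq : δ ∣ q - 1 := Nat.gcd_dvd_left _ _
  have hN2 : 2 ≤ N := by
    have := Nat.div_pos (Nat.le_of_dvd (by omega) hδq) hδ1
    omega
  have hone : iter (X ^ d - C a : F[X]) 1 = X ^ d - C a := iter_one a
  have hf1 : Irreducible (X ^ d - C a : F[X]) := by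
    rw [← hone]
    exact hirr 1 (le_refl 1) (by omega)
  have hprime : ∀ ℓ : ℕ, ℓ.Prime → ℓ ∣ d → ℓ ∣ q - 1 := fun ℓ hℓ hℓd =>
    prime_dvd_card_sub_one hd ha hf1 hℓ hℓd
  have hcondwin : ∀ k, 2 ≤ k → k ≤ N → ∀ ℓ : ℕ, ℓ.Prime → ℓ ∣ d →
      ∀ y : F, y ^ ℓ ≠ P d a k := by
    intro k hk2 hkN
    obtain ⟨j, rfl⟩ : ∃ j, k = j + 1 := ⟨k - 1, by omega⟩
    have h1 : Irreducible (iter (X ^ d - C a : F[X]) j) := hirr j (by omega) (by omega)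
    exact (crit hd hd4 a hprime (by omega) h1 (hP (j + 1) (by omega))).1
      (hirr (j + 1) (by omega) hkN)
  set ε : F := (-1) ^ (d - 1) with hε
  set W : Finset F :=
    (Finset.univ : Finset Fˣ).image (fun u : Fˣ => ((u ^ d : Fˣ) : F) + ε * a) with hW
  have hmemW : ∀ k, 2 ≤ k → P d a k ∈ W := by
    intro k hk
    obtain ⟨j, rfl⟩ : ∃ j, k = j + 1 := ⟨k - 1, by omega⟩
    have hPj : P d a j ≠ 0 := hP j (by omega)
    rw [P_succ a j (by omega)]
    refine Finset.mem_image.2 ⟨Units.mk0 (P d a j) hPj, Finset.mem_univ _, ?_⟩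
    rw [Units.val_pow_eq_pow_val, Units.val_mk0]
  have hcardW : W.card ≤ (q - 1) / δ := by
    have h1 : W = ((Finset.univ : Finset Fˣ).image (fun u : Fˣ => u ^ d)).image
        (fun v : Fˣ => ((v : F) + ε * a)) := by
      rw [Finset.image_image]
      rfl
    rw [h1]
    exact le_trans Finset.card_image_le (card_pow_image_le d)
  have hrep : ∃ i j, 2 ≤ i ∧ i < j ∧ j ≤ N + 1 ∧ P d a i = P d a j := by
    have hlt : W.card < (Finset.Icc 2 (N + 1)).card := by
      rw [Nat.card_Icc, show N + 1 + 1 - 2 = N by omega]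
      calc W.card ≤ (q - 1) / δ := hcardW
        _ < N := by omega
    obtain ⟨i, hi, j, hj, hne, heq⟩ := Finset.exists_ne_map_eq_of_card_lt_of_maps_to hlt
      (fun k hk => hmemW k (Finset.mem_Icc.1 hk).1)
    rcases lt_or_gt_of_ne hne with h | h
    · exact ⟨i, j, (Finset.mem_Icc.1 hi).1, h, (Finset.mem_Icc.1 hj).2, heq⟩
    · exact ⟨j, i, (Finset.mem_Icc.1 hj).1, h, (Finset.mem_Icc.1 hi).2, heq.symm⟩
  obtain ⟨i, j, hi2, hij, hjN, hPij⟩ := hrep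
  have hshift : ∀ t, P d a (i + t) = P d a (j + t) := by
    intro t
    induction t with
    | zero => simpa using hPij
    | succ t ih =>
        rw [show i + (t + 1) = (i + t) + 1 by omega, show j + (t + 1) = (j + t) + 1 by omega,
          P_succ a (i + t) (by omega), P_succ a (j + t) (by omega), ih]
  have hrepr : ∀ k, 2 ≤ k → ∃ k', 2 ≤ k' ∧ k' ≤ N ∧ P d a k' = P d a k := by
    intro k
    induction k using Nat.strong_induction_on with
    | _ k IH =>
      intro hk
      by_cases hkj : k < j
      · exact ⟨k, hk, by omega, rfl⟩
      · have h1 : P d a (k - (j - i)) = P d a k := by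
          have h2 := hshift (k - j)
          rw [show i + (k - j) = k - (j - i) by omega, show j + (k - j) = k by omega] at h2
          exact h2
        obtain ⟨k', h2, h3, h4⟩ := IH (k - (j - i)) (by omega) (by omega)
        exact ⟨k', h2, h3, h4.trans h1⟩
  have hcondall : ∀ k, 2 ≤ k → ∀ ℓ : ℕ, ℓ.Prime → ℓ ∣ d → ∀ y : F, y ^ ℓ ≠ P d a k := by
    intro k hk ℓ hℓ hℓd y
    obtain ⟨k', h2, h3, h4⟩ := hrepr k hk
    rw [← h4]
    exact hcondwin k' h2 h3 ℓ hℓ hℓd y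
  intro n
  induction n with
  | zero => omega
  | succ n IH =>
      intro _
      rcases Nat.lt_or_ge n 1 with h | h
      · have hn0 : n = 0 := by omega
        subst hn0
        rw [hone]
        exact hf1
      · exact (crit hd hd4 a hprime h (IH h) (hP (n + 1) (by omega))).2
          (hcondall (n + 1) (by omega))
end

section
/- Let q = 2^m with m ≥ 2. Then the following are equivalent: (i) for every α in F_q \ {0, 1}, x^{q-1} - α is stable over F_q; (ii) for every α in F_q \ {0, 1}, x^{q-1} - α is irreducible over F_q; (iii) q - 1 is prime (a Mersenne prime). -/
open Polynomial

/-!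
For `b` in `F_q`, `b ^ (q - 1)` is `0` or `1`, so when `q - 1` is prime, Kummer's criterion
makes `x ^ (q - 1) - α` irreducible for every `α ∉ {0, 1}`; when `q - 1` has a proper prime
factor `p`, `α = ζ ^ p` for a generator `ζ` of `F_qˣ` is a counterexample.

For stability, Capelli's lemma (`Polynomial.irreducible_comp`) reduces the irreducibility of
`g(x ^ (q - 1) - α)` to that of `x ^ (q - 1) - (β + α)` over `F_q(β)`, `β` a root of `g`. A
`(q - 1)`-th power has norm `0` or `1` over `F_q`, whereas in characteristic `2` the norm of
`β + α` is `g(α)`. Every iterate takes the value `1 - α ∉ {0, 1}` at `α`, because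
`x ^ (q - 1) - α` maps every nonzero element to `1 - α`.
-/

open IntermediateField

theorem Algebra.PowerBasis.norm_gen_add_algebraMap {K L : Type*} [Field K] [Field L]
    [Algebra K L] (pb : PowerBasis K L) (a : K) :
    Algebra.norm K (pb.gen + algebraMap K L a) =
      (-1) ^ pb.dim * (minpoly K pb.gen).eval (-a) := by
  have hint : IsIntegral K (pb.gen + algebraMap K L a) :=
    pb.isIntegral_gen.add isIntegral_algebraMap
  have hgen : pb.gen ∈ Algebra.adjoin K {pb.gen + algebraMap K L a} := by
    simpa using (Algebra.adjoin K {pb.gen + algebraMap K L a}).sub_mem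
      (Algebra.self_mem_adjoin_singleton K _) (Subalgebra.algebraMap_mem _ a)
  let pb' := PowerBasis.ofAdjoinEqTop hint (PowerBasis.adjoin_eq_top_of_gen_mem_adjoin hgen)
  have hnorm := Algebra.PowerBasis.norm_gen_eq_coeff_zero_minpoly pb'
  simp only [pb', PowerBasis.ofAdjoinEqTop_gen, PowerBasis.ofAdjoinEqTop_dim,
    minpoly.add_algebraMap] at hnorm
  rw [hnorm, natDegree_comp, pb.natDegree_minpoly, natDegree_X_sub_C, mul_one,
    coeff_zero_eq_eval_zero, eval_comp, eval_sub, eval_X, eval_C, zero_sub]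

section iter

variable {F : Type*} [Field F] (f : F[X])

theorem iter_one : iter f 1 = f := X_comp

theorem eval_iter (n : ℕ) (y : F) : (iter f n).eval y = (fun z => f.eval z)^[n] y := by
  induction n generalizing y with
  | zero => exact eval_X
  | succ n ih => rw [iter, eval_comp, ih, Function.iterate_succ_apply]

theorem Polynomial.Monic.iter {f : F[X]} (hf : f.Monic) (hdeg : f.natDegree ≠ 0) (n : ℕ) :
    (iter f n).Monic := by
  induction n with
  | zero => exact monic_X
  | succ n ih => exact ih.comp hf hdeg

end iter

section FiniteField

variable {F : Type*} [Field F] [Fintype F]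

theorem charP_two_of_card_eq_two_pow {m : ℕ} (hm : m ≠ 0) (hF : Fintype.card F = 2 ^ m) :
    CharP F 2 :=
  ringChar.eq_iff.mp <| FiniteField.even_card_iff_char_two.mpr <| by
    rw [hF, Nat.pow_mod, Nat.mod_self, zero_pow hm, Nat.zero_mod]

theorem FiniteField.norm_pow_card_sub_one {L : Type*} [Field L] [Algebra F L]
    [FiniteDimensional F L] {b : L} (hb : b ≠ 0) :
    Algebra.norm F (b ^ (Fintype.card F - 1)) = 1 := by
  rw [map_pow, FiniteField.pow_card_sub_one_eq_one _ (Algebra.norm_ne_zero_iff.mpr hb)]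

theorem X_pow_card_sub_one_sub_C_irreducible_of_norm_ne_one {L : Type*} [Field L] [Algebra F L]
    [FiniteDimensional F L] (hp : (Fintype.card F - 1).Prime) {c : L} (h0 : c ≠ 0)
    (h1 : Algebra.norm F c ≠ 1) : Irreducible (X ^ (Fintype.card F - 1) - C c) := by
  refine X_pow_sub_C_irreducible_of_prime hp fun b hb => h1 ?_
  rw [← hb, FiniteField.norm_pow_card_sub_one]
  rintro rfl
  exact h0 (by rw [← hb, zero_pow hp.ne_zero])

theorem X_pow_card_sub_one_sub_C_irreducible (hp : (Fintype.card F - 1).Prime) {α : F}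
    (h0 : α ≠ 0) (h1 : α ≠ 1) : Irreducible (X ^ (Fintype.card F - 1) - C α) :=
  X_pow_card_sub_one_sub_C_irreducible_of_norm_ne_one hp h0 (by rwa [Algebra.norm_self])

theorem prime_card_sub_one_of_forall_irreducible (hF : Fintype.card F ≠ 2)
    (h : ∀ α : F, α ≠ 0 → α ≠ 1 → Irreducible (X ^ (Fintype.card F - 1) - C α)) :
    (Fintype.card F - 1).Prime := by
  have hq : Fintype.card F - 1 ≠ 1 := by have := Fintype.one_lt_card (α := F); omega
  by_contra hnp
  set p := (Fintype.card F - 1).minFac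
  obtain ⟨ζ, hζ⟩ := IsCyclic.exists_ofOrder_eq_natCard (α := Fˣ)
  rw [Nat.card_units, Nat.card_eq_fintype_card] at hζ
  have hζp : ((ζ ^ p : Fˣ) : F) ≠ 1 := fun h1 => by
    have hdvd : Fintype.card F - 1 ∣ p :=
      hζ ▸ orderOf_dvd_of_pow_eq_one (Units.val_eq_one.mp h1)
    exact hnp (Nat.dvd_antisymm (Nat.minFac_dvd _) hdvd ▸ Nat.minFac_prime hq)
  exact pow_ne_of_irreducible_X_pow_sub_C (h _ (Units.ne_zero _) hζp) (Nat.minFac_dvd _)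
    (by simpa [p] using hq) (ζ : F) (Units.val_pow_eq_pow_val ζ p).symm

theorem forall_irreducible_X_pow_card_sub_one_sub_C_iff (hF : Fintype.card F ≠ 2) :
    (∀ α : F, α ≠ 0 → α ≠ 1 → Irreducible (X ^ (Fintype.card F - 1) - C α)) ↔
      (Fintype.card F - 1).Prime :=
  ⟨prime_card_sub_one_of_forall_irreducible hF,
    fun hp _ => X_pow_card_sub_one_sub_C_irreducible hp⟩

theorem irreducible_comp_X_pow_card_sub_one_sub_C [CharP F 2] (hp : (Fintype.card F - 1).Prime)
    {g : F[X]} (hgm : g.Monic) (hg : Irreducible g) {α : F} (h0 : g.eval α ≠ 0)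
    (h1 : g.eval α ≠ 1) : Irreducible (g.comp (X ^ (Fintype.card F - 1) - C α)) := by
  refine irreducible_comp hgm (monic_X_pow_sub_C α hp.ne_zero) hg fun E _ _ x hx => ?_
  have hxint : IsIntegral F x := minpoly.ne_zero_iff.mp (hx ▸ hg.ne_zero)
  have := adjoin.finiteDimensional hxint
  have hN : Algebra.norm F (AdjoinSimple.gen F x + algebraMap F F⟮x⟯ α) = g.eval α := by
    rw [← adjoin.powerBasis_gen hxint, Algebra.PowerBasis.norm_gen_add_algebraMap,
      adjoin.powerBasis_gen, minpoly_gen, hx]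
    simp only [CharTwo.neg_eq, one_pow, one_mul]
  rw [Polynomial.map_sub, Polynomial.map_pow, map_X, map_C, sub_sub, ← C_add, add_comm]
  exact X_pow_card_sub_one_sub_C_irreducible_of_norm_ne_one hp
    (fun hc => h0 (by rw [← hN, hc, Algebra.norm_zero])) (hN ▸ h1)

theorem irreducible_iter_X_pow_card_sub_one_sub_C [CharP F 2] (hp : (Fintype.card F - 1).Prime)
    {α : F} (h0 : α ≠ 0) (h1 : α ≠ 1) (n : ℕ) :
    Irreducible (iter (X ^ (Fintype.card F - 1) - C α) (n + 1)) := by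
  set f : F[X] := X ^ (Fintype.card F - 1) - C α
  have hf : ∀ y : F, y ≠ 0 → f.eval y = 1 - α := fun y hy => by
    simp [f, FiniteField.pow_card_sub_one_eq_one y hy]
  have h1α : 1 - α ≠ 0 := sub_ne_zero.mpr h1.symm
  have heval : ∀ k : ℕ, (iter f (k + 1)).eval α = 1 - α := fun k => by
    rw [eval_iter, Function.iterate_succ_apply, hf α h0, Function.iterate_fixed (hf _ h1α)]
  induction n with
  | zero => rw [iter_one]; exact X_pow_card_sub_one_sub_C_irreducible hp h0 h1
  | succ n ih =>
    have hfm : f.Monic := monic_X_pow_sub_C α hp.ne_zero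
    refine irreducible_comp_X_pow_card_sub_one_sub_C hp (hfm.iter ?_ _) ih ?_ ?_
    · rw [natDegree_X_pow_sub_C]; exact hp.ne_zero
    · rw [heval]; exact h1α
    · rw [heval, Ne, sub_eq_self]; exact h0

end FiniteField

theorem stmt19 (m : ℕ) (hm : 2 ≤ m)
    (F : Type*) [Field F] [Fintype F] (hF : Fintype.card F = 2 ^ m) :
    ((∀ α : F, α ≠ 0 → α ≠ 1 →
        ∀ n : ℕ, 1 ≤ n → Irreducible (iter (X ^ (2 ^ m - 1) - C α : F[X]) n)) ↔
      (∀ α : F, α ≠ 0 → α ≠ 1 → Irreducible (X ^ (2 ^ m - 1) - C α : F[X])))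
    ∧ ((∀ α : F, α ≠ 0 → α ≠ 1 → Irreducible (X ^ (2 ^ m - 1) - C α : F[X])) ↔
        Nat.Prime (2 ^ m - 1)) := by
  have := charP_two_of_card_eq_two_pow (by omega) hF
  have hF2 : Fintype.card F ≠ 2 := by
    rw [hF]; exact (Nat.pow_lt_pow_right one_lt_two (by omega : 1 < m)).ne'
  rw [← hF]
  have hprime := forall_irreducible_X_pow_card_sub_one_sub_C_iff hF2
  refine ⟨⟨fun h α h0 h1 => by simpa only [iter_one] using h α h0 h1 1 le_rfl,
    fun h α h0 h1 n hn => ?_⟩, hprime⟩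
  obtain ⟨k, rfl⟩ : ∃ k, n = k + 1 := ⟨n - 1, by omega⟩
  exact irreducible_iter_X_pow_card_sub_one_sub_C (hprime.mp h) h0 h1 k
end
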